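/- End-point property of the derivative at the right end-point: for every natural number n ≥ 1, real parameters α, β with 0 ≤ α ≤ β, and control points P_0, …, P_n in ℝ^d (or any real normed vector space), the Bézier curve P(t) = ∑_{k=0}^{n} P_k · G_{n,α,β}^k(t) satisfies P′((n+α)/(n+β)) = (n+β) · (P_n − P_{n−1}); in particular the curve is tangent to the last edge of its control polygon at the right end-point. -/

import Mathlib

/-!
With `a = α/(n+β)`, `b = (n+α)/(n+β)` and `c = ((n+β)/n)^n`, the curve is
`c ∑ C(n,k) (t-a)^k (b-t)^(n-k) P_k`. At `t = b` every term with `k ≤ n-2` keeps a factor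
`(b-t)^2` and has zero derivative, so only the last two terms contribute, giving
`c n (b-a)^(n-1) (P_n - P_{n-1})`. Since `b - a = n/(n+β)`, this constant equals `n + β`.
-/

/-- Bernstein functions with shifted knots of degree `n`:
`G_{n,α,β}^k(t) = C(n,k) ((n+β)/n)^n (t - α/(n+β))^k ((n+α)/(n+β) - t)^(n-k)`. -/
noncomputable def G (n : ℕ) (α β : ℝ) (k : ℕ) (t : ℝ) : ℝ :=
  (n.choose k : ℝ) * ((n + β) / n) ^ n * (t - α / (n + β)) ^ k *
    ((n + α) / (n + β) - t) ^ (n - k)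

open Finset

theorem hasDerivAt_sub_pow_mul_sub_pow (a b t : ℝ) (k j : ℕ) :
    HasDerivAt (fun s => (s - a) ^ k * (b - s) ^ j)
      (k * (t - a) ^ (k - 1) * (b - t) ^ j - j * (t - a) ^ k * (b - t) ^ (j - 1)) t :=
  ((((hasDerivAt_id' t).sub_const a).fun_pow k).fun_mul
    (((hasDerivAt_id' t).const_sub b).fun_pow j)).congr_deriv (by ring)

theorem hasDerivAt_bernstein_sum_right {E : Type*} [NormedAddCommGroup E] [NormedSpace ℝ E]
    {n : ℕ} (hn : n ≠ 0) (c a b : ℝ) (P : ℕ → E) :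
    HasDerivAt
      (fun t => ∑ k ∈ range (n + 1),
        ((n.choose k : ℝ) * c * (t - a) ^ k * (b - t) ^ (n - k)) • P k)
      ((c * n * (b - a) ^ (n - 1)) • (P n - P (n - 1))) b := by
  have hterm : ∀ k ∈ range (n + 1), HasDerivAt
      (fun t => ((n.choose k : ℝ) * c * (t - a) ^ k * (b - t) ^ (n - k)) • P k)
      (((n.choose k : ℝ) * c * (k * (b - a) ^ (k - 1) * 0 ^ (n - k)
        - ↑(n - k) * (b - a) ^ k * 0 ^ (n - k - 1))) • P k) b := fun k _ => by
    have := ((hasDerivAt_sub_pow_mul_sub_pow a b b k (n - k)).const_mul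
      ((n.choose k : ℝ) * c)).smul_const (P k)
    simpa only [sub_self, mul_assoc] using this
  convert HasDerivAt.sum hterm using 1
  · ext t
    simp only [Finset.sum_apply]
  obtain ⟨m, rfl⟩ := Nat.exists_eq_add_one_of_ne_zero hn
  rw [sum_range_succ, sum_range_succ, sum_eq_zero fun k hk => ?_]
  · simp only [Nat.cast_add, Nat.cast_one, add_tsub_cancel_right, Nat.choose_succ_self_right,
      add_tsub_cancel_left, pow_one, mul_zero, one_mul, tsub_self, pow_zero, mul_one, zero_sub,
      mul_neg, neg_smul, zero_add, Nat.choose_self, CharP.cast_eq_zero, zero_mul, zero_tsub,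
      sub_zero]
    module
  · have : 2 ≤ m + 1 - k := by have := mem_range.mp hk; omega
    rw [zero_pow (by omega), zero_pow (by omega)]
    simp

theorem div_pow_mul_mul_div_pow_pred {K : Type*} [Field K] (x : K) {y : K} (hy : y ≠ 0)
    {n : ℕ} (hn : n ≠ 0) : (x / y) ^ n * y * (y / x) ^ (n - 1) = x := by
  obtain ⟨m, rfl⟩ := Nat.exists_eq_add_one_of_ne_zero hn
  rcases eq_or_ne x 0 with rfl | hx
  · simp
  · rw [Nat.add_sub_cancel, div_pow, div_pow]
    field_simp
    ring

theorem bezier_deriv_right_general (n : ℕ) (hn : 1 ≤ n) (α β : ℝ)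
    {E : Type*} [NormedAddCommGroup E] [NormedSpace ℝ E] (P : ℕ → E) :
    HasDerivAt (fun s => ∑ k ∈ Finset.range (n + 1), G n α β k s • P k)
      (((n : ℝ) + β) • (P n - P (n - 1))) ((n + α) / (n + β)) := by
  have hn₀ : n ≠ 0 := Nat.one_le_iff_ne_zero.mp hn
  convert hasDerivAt_bernstein_sum_right hn₀ (((n + β) / n) ^ n) (α / (n + β))
    ((n + α) / (n + β)) P using 2
  · rfl
  rw [← sub_div, add_sub_cancel_right,
    div_pow_mul_mul_div_pow_pred _ (Nat.cast_ne_zero.mpr hn₀) hn₀]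

/-- End-point property of the derivative at the right end-point: the Bézier curve
with shifted knots is tangent to the last edge of its control polygon. -/
theorem bezier_deriv_right (n : ℕ) (hn : 1 ≤ n) (α β : ℝ) (hα : 0 ≤ α) (hαβ : α ≤ β)
    {E : Type*} [NormedAddCommGroup E] [NormedSpace ℝ E] (P : ℕ → E) :
    HasDerivAt (fun s => ∑ k ∈ Finset.range (n + 1), G n α β k s • P k)
      (((n : ℝ) + β) • (P n - P (n - 1))) ((n + α) / (n + β)) :=
  bezier_deriv_right_general n hn α β P
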